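/- arXiv:1806.09806 — 6 statements merged into one kernel-verified Lean document; each statement's English description precedes it below -/
import Mathlib

section
/- Let w be a pp-irreducible string and c < d positions of w. Then c ⊏_w d if and only if d ≤ c + ρ_w(c) ≤ d + ρ_w(d); that is, for pp-irreducible strings the condition c ≤ d − ρ_w(d) in the definition of ⊏_w is redundant, because positions with d − ρ_w(d) < c < d ≤ c + ρ_w(c) ≤ d + ρ_w(d) would give a Z-shape occurrence ⟨c,d⟩ ending strictly before position |w|, which is impossible in a pp-irreducible string. -/
/-!
Common definitions: strings as `List α` over an alphabet `α`, 1-based positions.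
-/

variable {α : Type*}

/-- The substring `w[i:j]` (1-based, inclusive; empty when `j < i`). -/
def seg (w : List α) (i j : ℕ) : List α := (w.take j).drop (i - 1)

/-- `w` has an even palindrome of radius `r` centered at position `c`:
`r ≤ c`, `c + r ≤ |w|` and `w[c−k+1] = w[c+k]` for all `1 ≤ k ≤ r`
(here expressed with 0-based list indexing: `w[c−k]? = w[c+k−1]?`). -/
def PalAt (w : List α) (c r : ℕ) : Prop :=
  r ≤ c ∧ c + r ≤ w.length ∧ ∀ k, 1 ≤ k → k ≤ r → w[c - k]? = w[c + k - 1]?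

/-- `ρ_w(c)`: the maximal even-palindrome radius at center `c`. -/
noncomputable def rho (w : List α) (c : ℕ) : ℕ := sSup {r | PalAt w c r}

/-- The reduction relation: `x y yᴿ y z → x y z` for nonempty `y`. -/
def Reduces (w w' : List α) : Prop :=
  ∃ x y z : List α, y ≠ [] ∧ w = x ++ y ++ y.reverse ++ y ++ z ∧ w' = x ++ y ++ z

/-- A string is irreducible if no reduction applies to it. -/
def ZIrreducible (w : List α) : Prop := ∀ w', ¬ Reduces w w'

def ZReducible (w : List α) : Prop := ∃ w', Reduces w w'

/-- `w` is pp-irreducible if its longest proper prefix `w[1:|w|−1]` is irreducible. -/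
def PPIrreducible (w : List α) : Prop := ZIrreducible w.dropLast

/-- `w` is ss-reducible if it is reducible and pp-irreducible. -/
def SSReducible (w : List α) : Prop := ZReducible w ∧ PPIrreducible w

/-- A Z-shape occurrence `⟨p1, p2⟩` in `w`: with `s = p2 − p1 ≥ 1`, `p1 − s ≥ 0`,
`p2 + s ≤ |w|` and `w[p1−s+1 : p2+s] = x xᴿ x` where `x = w[p1−s+1 : p1]`. -/
def ZOcc (w : List α) (p1 p2 : ℕ) : Prop :=
  p1 < p2 ∧ p2 - p1 ≤ p1 ∧ p2 + (p2 - p1) ≤ w.length ∧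
    seg w (p1 - (p2 - p1) + 1) (p2 + (p2 - p1)) =
      seg w (p1 - (p2 - p1) + 1) p1 ++ (seg w (p1 - (p2 - p1) + 1) p1).reverse ++
        seg w (p1 - (p2 - p1) + 1) p1

/-- `c ⊏_w d` : `c ≤ d − ρ_w(d) ≤ d ≤ c + ρ_w(c) ≤ d + ρ_w(d)` with `c ≠ d`
(written without truncated subtraction). -/
def Sqsub (w : List α) (c d : ℕ) : Prop :=
  c < d ∧ c + rho w d ≤ d ∧ d ≤ c + rho w c ∧ c + rho w c ≤ d + rho w d

/-- `𝓕_w(c)`: the maximum frontier over all palindrome chains from `c`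
(a palindrome chain is a nonempty list starting at `c` whose consecutive
elements are related by `⊏_w`; its frontier is `e + ρ_w(e)` for its last element `e`). -/
noncomputable def maxFrontier (w : List α) (c : ℕ) : ℕ :=
  sSup {f | ∃ l : List ℕ, l.head? = some c ∧ l.Chain' (Sqsub w) ∧
      ∃ e, l.getLast? = some e ∧ f = e + rho w e}

/-- `𝓐_w(d)`: the smallest position `c` with `c ≤ d ≤ 𝓕_w(c)`. -/
noncomputable def originator (w : List α) (d : ℕ) : ℕ :=
  sInf {c | 1 ≤ c ∧ c ≤ d ∧ d ≤ maxFrontier w c}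

/-- A position `c` of a pp-irreducible string `w` is stable if `𝓕_w(c) < |w|`. -/
def Stable (w : List α) (c : ℕ) : Prop := maxFrontier w c < w.length

/-- `c` is strongly stable if every position in `[1:c]` is stable. -/
def StronglyStable (w : List α) (c : ℕ) : Prop := ∀ e, 1 ≤ e → e ≤ c → Stable w e

/-- `T` is the output of an end-to-end walk on the path graph labeled `u`:
there are vertices `p 0 = 0, …, p |T| = |u|`, each `≤ |u|`, consecutive ones
adjacent, and `T[i] = u[max (p (i−1)) (p i)]` (1-based; here 0-based indexing). -/
def EndToEndWalkOutput (u T : List α) : Prop :=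
  ∃ p : ℕ → ℕ, p 0 = 0 ∧ p T.length = u.length ∧
    (∀ i, i ≤ T.length → p i ≤ u.length) ∧
    (∀ i, i < T.length → p (i + 1) = p i + 1 ∨ p i = p (i + 1) + 1) ∧
    (∀ i, i < T.length → T[i]? = u[max (p i) (p (i + 1)) - 1]?)

/-- `P` is accurate enough between `a` and `b`:
`min (P e) (b − e) = min (ρ_w e) (b − e)` for all `e ∈ [a:b]`. -/
def AccEnough (w : List α) (P : ℕ → ℕ) (a b : ℕ) : Prop :=
  ∀ e, a ≤ e → e ≤ b → min (P e) (b - e) = min (rho w e) (b - e)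

open Classical in
/-- `ν_w(c)`: the largest `e` with `e ⊏_w c`, or `1` if there is none. -/
noncomputable def nu (w : List α) (c : ℕ) : ℕ :=
  if ∃ e, Sqsub w e c then sSup {e | Sqsub w e c} else 1

/-- `c` is left-good w.r.t. `P` if `P` is accurate enough between `ν_w(c)` and `c`. -/
def LeftGood (w : List α) (P : ℕ → ℕ) (c : ℕ) : Prop := AccEnough w P (nu w c) c

/-- `c` is right-good w.r.t. `P` if `P` is accurate enough between `c` and `c + ρ_w(c)`. -/
def RightGood (w : List α) (P : ℕ → ℕ) (c : ℕ) : Prop := AccEnough w P c (c + rho w c)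

/-! Proof idea: if `d ≤ c + ρ(c) ≤ d + ρ(d)` but `ρ(d) > s := d - c`, then the palindromes
of radius `s` centred at `c` and at `d` read `x`, `xᴿ`, `x` on the blocks `(c - s, c]`, `(c, d]`,
`(d, d + s]`, and `ρ(d) > s` puts position `d + s` strictly before `|w|`. This Z-shape lies in
the longest proper prefix of `w`, contradicting pp-irreducibility. -/

namespace PalAt

variable {w : List α} {c r : ℕ}

theorem mono (h : PalAt w c r) {r' : ℕ} (hr : r' ≤ r) : PalAt w c r' :=
  ⟨hr.trans h.1, by have := h.2.1; omega, fun k hk hkr => h.2.2 k hk (hkr.trans hr)⟩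

theorem take (h : PalAt w c r) {n : ℕ} (hn : c + r ≤ n) : PalAt (w.take n) c r := by
  obtain ⟨hrc, hlen, hpal⟩ := h
  refine ⟨hrc, by rw [List.length_take]; omega, fun k hk hkr => ?_⟩
  rw [List.getElem?_take, List.getElem?_take, if_pos (by omega), if_pos (by omega)]
  exact hpal k hk hkr

theorem block_eq_reverse (h : PalAt w c r) :
    (w.drop c).take r = ((w.drop (c - r)).take r).reverse := by
  obtain ⟨hrc, hlen, hpal⟩ := h
  have hleft : ((w.drop (c - r)).take r).length = r := by
    rw [List.length_take, List.length_drop]; omega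
  apply List.ext_getElem?
  intro i
  by_cases hi : i < r
  · rw [List.getElem?_reverse (by omega), hleft, List.getElem?_take, List.getElem?_take,
      if_pos hi, if_pos (by omega), List.getElem?_drop, List.getElem?_drop,
      show c - r + (r - 1 - i) = c - (i + 1) by omega, hpal (i + 1) (by omega) (by omega),
      show c + (i + 1) - 1 = c + i by omega]
  · rw [List.getElem?_eq_none (by rw [List.length_take]; omega),
      List.getElem?_eq_none (by rw [List.length_reverse, hleft]; omega)]

end PalAt

theorem palAt_of_le_rho {w : List α} {c r : ℕ} (hr : 0 < r) (h : r ≤ rho w c) :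
    PalAt w c r := by
  have hne : {r | PalAt w c r}.Nonempty := by
    by_contra hempty
    rw [rho, Set.not_nonempty_iff_eq_empty.mp hempty, csSup_empty] at h
    exact (Nat.lt_irrefl 0) (hr.trans_le h)
  exact (Nat.sSup_mem hne ⟨c, fun _ hr' => hr'.1⟩ : PalAt w c (rho w c)).mono h

theorem drop_eq_take_append_drop (w : List α) (i s : ℕ) :
    w.drop i = (w.drop i).take s ++ w.drop (i + s) := by
  rw [← List.drop_drop, List.take_append_drop]

theorem zReducible_of_palAt {w : List α} {c s : ℕ} (hs : 0 < s) (hc : PalAt w c s)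
    (hd : PalAt w (c + s) s) : ZReducible w := by
  set x := (w.drop (c - s)).take s
  have hx : x ≠ [] := by
    rw [← List.length_pos_iff, List.length_take, List.length_drop]
    have := hc.1; have := hc.2.1; omega
  have hmid : (w.drop c).take s = x.reverse := hc.block_eq_reverse
  have hright : (w.drop (c + s)).take s = x := by
    rw [hd.block_eq_reverse, Nat.add_sub_cancel, hmid, List.reverse_reverse]
  refine ⟨_, w.take (c - s), x, w.drop (c + s + s), hx, ?_, rfl⟩
  conv_lhs =>
    rw [← List.take_append_drop (c - s) w, drop_eq_take_append_drop w (c - s) s,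
      Nat.sub_add_cancel hc.1, drop_eq_take_append_drop w c s,
      drop_eq_take_append_drop w (c + s) s, hmid, hright]
  simp only [List.append_assoc, x]

theorem sqsub_iff_of_ppIrreducible_general (w : List α) (hpp : PPIrreducible w) (c d : ℕ)
    (hcd : c < d) :
    Sqsub w c d ↔ (d ≤ c + rho w c ∧ c + rho w c ≤ d + rho w d) := by
  refine ⟨fun h => h.2.2, fun ⟨hfront, hfront'⟩ => ⟨hcd, ?_, hfront, hfront'⟩⟩
  by_contra! hlong
  set s := d - c
  have hpc : PalAt w c s := palAt_of_le_rho (by omega) (by omega)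
  have hpd : PalAt w d (s + 1) := palAt_of_le_rho (by omega) (by omega)
  have hprefix : d + s < w.length := by have := hpd.2.1; omega
  have hd : d = c + s := by omega
  obtain ⟨w', hred⟩ : ZReducible w.dropLast := by
    rw [List.dropLast_eq_take]
    have hpd' : PalAt w (c + s) s := hd ▸ hpd.mono s.le_succ
    exact zReducible_of_palAt (by omega) (hpc.take (by omega)) (hpd'.take (by omega))
  exact hpp w' hred

/-- for a pp-irreducible string `w` and positions `c < d`,
`c ⊏_w d` iff `d ≤ c + ρ_w(c) ≤ d + ρ_w(d)` (the condition `c ≤ d − ρ_w(d)`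
is redundant). -/
theorem sqsub_iff_of_ppIrreducible (w : List α) (hpp : PPIrreducible w) (c d : ℕ)
    (hc : 1 ≤ c) (hcd : c < d) (hd : d ≤ w.length) :
    Sqsub w c d ↔ (d ≤ c + rho w c ∧ c + rho w c ≤ d + rho w d) :=
  sqsub_iff_of_ppIrreducible_general w hpp c d hcd
end

section
/- Every ss-reducible string w has exactly one nonempty suffix palindrome: there is exactly one integer r ≥ 1 such that 2r ≤ |w| and w[|w|−2r+1 : |w|] = x xᴿ for some string x (equivalently, exactly one r ≥ 1 with ρ_w(|w|−r) ≥ r). -/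
/-!
Common definitions: strings as `List α` over an alphabet `α`, 1-based positions.
-/

variable {α : Type*}

/-!
An ss-reducible string has the shape `x y yᴿ y`: its reduction site must touch the last letter,
since the prefix without that letter is irreducible. So `yᴿ y` is a suffix palindrome. Against
any other nonempty suffix palindrome `q qᴿ` one finds a factor `z zᴿ z` followed by at least one
letter, which would make the prefix reducible. Which `z` works depends on how `|q|` compares with
`|y|`: for `2|q| ≤ |y|` the palindrome lies inside the last `y` and `z = qᴿ`; for
`|y| < 2|q| ≤ 4|y|` the shorter of the two suffix palindromes is at least half as long as the
longer one, and `|z|` is the difference of their half-lengths; for `|q| > 2|y|` the palindrome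
`q qᴿ` reflects its suffix `y yᴿ y` to a proper prefix `yᴿ y yᴿ`.
-/

open List

theorem zIrreducible_iff_not_zReducible {w : List α} : ZIrreducible w ↔ ¬ ZReducible w :=
  not_exists.symm

theorem zReducible_of_infix {y w : List α} (hy : y ≠ []) (h : y ++ y.reverse ++ y <:+: w) :
    ZReducible w := by
  obtain ⟨s, t, rfl⟩ := h
  exact ⟨s ++ y ++ t, s, y, t, hy, by simp only [append_assoc], rfl⟩

theorem infix_dropLast_of_append_suffix {u t w : List α} (ht : t ≠ []) (h : u ++ t <:+ w) :
    u <:+: w.dropLast := by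
  obtain ⟨s, rfl⟩ := h
  exact ⟨s, t.dropLast, by rw [← append_assoc, dropLast_append_of_ne_nil ht, append_assoc]⟩

theorem zReducible_dropLast_of_suffix {z t w : List α} (hz : z ≠ []) (ht : t ≠ [])
    (h : z ++ z.reverse ++ z ++ t <:+ w) : ZReducible w.dropLast :=
  zReducible_of_infix hz (infix_dropLast_of_append_suffix ht h)

theorem SSReducible.exists_eq_zShape {w : List α} (h : SSReducible w) :
    ∃ x y : List α, y ≠ [] ∧ w = x ++ y ++ y.reverse ++ y := by
  obtain ⟨⟨-, x, y, z, hy, rfl, -⟩, hpp⟩ := h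
  rcases eq_or_ne z [] with rfl | hz
  · exact ⟨x, y, hy, append_nil _⟩
  · exact absurd (zReducible_dropLast_of_suffix hy hz ⟨x, by simp only [append_assoc]⟩)
      (zIrreducible_iff_not_zReducible.1 hpp)

theorem zReducible_dropLast_append_zShape_of_evenPal_suffix {x y q : List α} (hq : q ≠ [])
    (h : q ++ q.reverse <:+ y) : ZReducible (x ++ y ++ y.reverse ++ y).dropLast := by
  obtain ⟨y₀, rfl⟩ := h
  refine zReducible_dropLast_of_suffix (z := q.reverse) (t := y₀.reverse ++ y₀ ++ q ++ q.reverse)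
    (by simpa using hq) (by simp [hq]) ⟨x ++ y₀ ++ q, ?_⟩
  simp only [reverse_append, reverse_reverse, append_assoc]

theorem zReducible_dropLast_of_evenPal_suffixes {u v w : List α} (hlt : u.length < v.length)
    (hle : v.length ≤ 2 * u.length) (hu : u ++ u.reverse <:+ w) (hv : v ++ v.reverse <:+ w) :
    ZReducible w.dropLast := by
  have huv : u ++ u.reverse <:+ v ++ v.reverse :=
    suffix_of_suffix_length_le hu hv (by simp only [length_append, length_reverse]; omega)
  -- both sides are palindromes, so the suffix is also a prefix
  have hpre : u ++ u.reverse <+: v ++ v.reverse := reverse_suffix.1 (by simpa using huv)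
  obtain ⟨s, rfl⟩ : u <+: v :=
    prefix_of_prefix_length_le ((prefix_append _ _).trans hpre) (prefix_append _ _) hlt.le
  have hs : s ≠ [] := by rintro rfl; simp at hlt
  have hus : u <:+ u ++ s ++ s.reverse := by
    rw [← suffix_append_self_iff (l₃ := u.reverse)]
    simpa only [reverse_append, append_assoc] using huv
  obtain ⟨u', rfl⟩ : s.reverse <:+ u :=
    suffix_of_suffix_length_le (suffix_append _ _) hus (by simp only [length_append, length_reverse] at hle ⊢; omega)
  refine zReducible_dropLast_of_suffix (z := s.reverse) (t := s ++ u'.reverse)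
    (by simpa using hs) (by simp [hs]) (IsSuffix.trans ⟨u', ?_⟩ hv)
  simp only [reverse_append, reverse_reverse, append_assoc]

theorem zReducible_dropLast_of_zShape_suffix_of_pal {y p w : List α} (hy : y ≠ [])
    (hp : p.reverse = p) (hyp : y ++ y.reverse ++ y <:+ p)
    (hlt : (y ++ y.reverse ++ y).length < p.length) (hpw : p <:+ w) : ZReducible w.dropLast := by
  obtain ⟨c, rfl⟩ := hyp
  have hc : c ≠ [] := by rintro rfl; simp at hlt
  refine zReducible_dropLast_of_suffix (z := y.reverse) (t := c.reverse) (by simpa using hy)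
    (by simpa using hc) ?_
  rw [← hp] at hpw
  simpa only [reverse_append, reverse_reverse, append_assoc] using hpw

theorem length_eq_of_evenPal_suffix {x y q : List α} (hy : y ≠ []) (hq : q ≠ [])
    (hpp : PPIrreducible (x ++ y ++ y.reverse ++ y))
    (hqs : q ++ q.reverse <:+ x ++ y ++ y.reverse ++ y) : q.length = y.length := by
  by_contra hne
  refine zIrreducible_iff_not_zReducible.1 hpp ?_
  have hyw : y.reverse ++ y.reverse.reverse <:+ x ++ y ++ y.reverse ++ y :=
    ⟨x ++ y, by simp only [reverse_reverse, append_assoc]⟩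
  have hq0 := length_pos_iff.2 hq
  have hy0 := length_pos_iff.2 hy
  rcases (by omega : 2 * q.length ≤ y.length ∨ 2 * q.length > y.length ∧ q.length < y.length ∨
      y.length < q.length ∧ q.length ≤ 2 * y.length ∨ 2 * y.length < q.length) with
    hshort | hshorter | hlonger | hlong
  · exact zReducible_dropLast_append_zShape_of_evenPal_suffix hq
      (suffix_of_suffix_length_le hqs (suffix_append _ _)
        (by simp only [length_append, length_reverse]; omega))
  · exact zReducible_dropLast_of_evenPal_suffixes (by simpa using hshorter.2)
      (by simpa using hshorter.1.le) hqs hyw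
  · exact zReducible_dropLast_of_evenPal_suffixes (by simpa using hlonger.1)
      (by simpa using hlonger.2) hyw hqs
  · refine zReducible_dropLast_of_zShape_suffix_of_pal hy (by simp) ?_ ?_ hqs
    · exact suffix_of_suffix_length_le ⟨x, by simp only [append_assoc]⟩ hqs
        (by simp only [length_append, length_reverse]; omega)
    · simp only [length_append, length_reverse]; omega

theorem seg_succ_length_eq_drop (w : List α) (n : ℕ) : seg w (n + 1) w.length = w.drop n := by
  simp [seg]

/-- every ss-reducible string has exactly one nonempty suffix palindrome:
exactly one `r ≥ 1` with `2r ≤ |w|` and `w[|w|−2r+1 : |w|] = x xᴿ` for some `x`. -/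
theorem ssReducible_unique_suffix_palindrome (w : List α) (h : SSReducible w) :
    ∃! r : ℕ, 1 ≤ r ∧ 2 * r ≤ w.length ∧
      ∃ x : List α, seg w (w.length - 2 * r + 1) w.length = x ++ x.reverse := by
  obtain ⟨x, y, hy, rfl⟩ := h.exists_eq_zShape
  have hlen : (x ++ y ++ y.reverse ++ y).length = (x ++ y).length + 2 * y.length := by
    simp only [length_append, length_reverse]; omega
  refine ⟨y.length, ⟨length_pos_iff.2 hy, by omega, y.reverse, ?_⟩, ?_⟩
  · rw [seg_succ_length_eq_drop, hlen, Nat.add_sub_cancel]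
    simp [append_assoc]
  · rintro r ⟨hr, hrw, q, hq⟩
    rw [seg_succ_length_eq_drop] at hq
    obtain rfl : q.length = r := by
      have := congrArg length hq
      simp only [length_drop, length_append, length_reverse] at this hrw
      omega
    exact length_eq_of_evenPal_suffix hy (ne_nil_of_length_pos hr) h.2 (hq ▸ drop_suffix _ _)
end

section
/- Every ss-reducible string w contains exactly one Z-shape occurrence ⟨p1, p2⟩, and this occurrence is a suffix occurrence, i.e., p2 + (p2 − p1) = |w|. -/
/-!
Common definitions: strings as `List α` over an alphabet `α`, 1-based positions.
-/

variable {α : Type*}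

/-! ### Auxiliary machinery -/

/-- Pointwise even palindrome centered at boundary `c` (0-based) with radius `r`. -/
def PalPt (w : List α) (c r : ℕ) : Prop :=
  ∀ p q : ℕ, p + q + 1 = 2 * c → c ≤ q → q < c + r → w[p]? = w[q]?

lemma getElem?_idx_congr {w : List α} {i j : ℕ} (h : i = j) : w[i]? = w[j]? := by rw [h]

lemma palPt_use {w : List α} {c r p q : ℕ} (h : PalPt w c r)
    (hpq : p + q + 1 = 2 * c) (hp : c ≤ p + r) (hq : c ≤ q + r) : w[p]? = w[q]? := by
  rcases le_or_gt c q with h' | h'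
  · exact h p q hpq h' (by omega)
  · exact (h q p (by omega) (by omega) (by omega)).symm

lemma palPt_mono {w : List α} {c r r' : ℕ} (h : PalPt w c r) (hr : r' ≤ r) : PalPt w c r' :=
  fun p q h1 h2 h3 => h p q h1 h2 (by omega)

lemma seg_getElem? (w : List α) (a b i : ℕ) :
    (seg w (a + 1) b)[i]? = if a + i < b then w[a + i]? else none := by
  simp only [seg, Nat.add_sub_cancel, List.getElem?_drop, List.getElem?_take]

lemma seg_length (a : ℕ) {w : List α} {b : ℕ} (hb : b ≤ w.length) :
    (seg w (a + 1) b).length = b - a := by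
  simp only [seg, Nat.add_sub_cancel, List.length_drop, List.length_take]
  omega

lemma take_eq_take_append (l : List α) {i j : ℕ} (h : i ≤ j) :
    l.take j = l.take i ++ (l.take j).drop i := by
  conv_lhs => rw [← List.take_append_drop i (l.take j)]
  rw [List.take_take, min_eq_left h]

lemma trip_eval {w : List α} {a p1 s : ℕ} (hs : p1 = a + s) (h2 : p1 ≤ w.length) (i : ℕ) :
    (seg w (a+1) p1 ++ (seg w (a+1) p1).reverse ++ seg w (a+1) p1)[i]? =
      if i < s then w[a + i]?
      else if i < 2*s then w[a + (2*s - 1 - i)]?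
      else if i < 3*s then w[a + (i - 2*s)]?
      else none := by
  set Z := seg w (a+1) p1 with hZ
  have hZl : Z.length = s := by rw [hZ, seg_length a h2]; omega
  have hZr : Z.reverse.length = s := by rw [List.length_reverse, hZl]
  have hZZ : (Z ++ Z.reverse).length = 2*s := by rw [List.length_append, hZl, hZr]; omega
  have hsegel : ∀ j, Z[j]? = if a + j < p1 then w[a + j]? else none := fun j => by
    rw [hZ]; exact seg_getElem? w a p1 j
  by_cases c1 : i < s
  · have e1 : (Z ++ Z.reverse ++ Z)[i]? = (Z ++ Z.reverse)[i]? :=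
      List.getElem?_append_left (by omega)
    have e2 : (Z ++ Z.reverse)[i]? = Z[i]? := List.getElem?_append_left (by omega)
    rw [e1, e2, hsegel i, if_pos (show a + i < p1 by omega), if_pos c1]
  · by_cases c2 : i < 2*s
    · have e1 : (Z ++ Z.reverse ++ Z)[i]? = (Z ++ Z.reverse)[i]? :=
        List.getElem?_append_left (by omega)
      have e2 : (Z ++ Z.reverse)[i]? = Z.reverse[i - Z.length]? :=
        List.getElem?_append_right (by omega)
      have e3 : Z.reverse[i - Z.length]? = Z[Z.length - 1 - (i - Z.length)]? :=
        List.getElem?_reverse (by omega)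
      rw [e1, e2, e3, hsegel _, if_pos (show a + (Z.length - 1 - (i - Z.length)) < p1 by omega),
        if_neg c1, if_pos c2]
      exact getElem?_idx_congr (by omega)
    · by_cases c3 : i < 3*s
      · have e1 : (Z ++ Z.reverse ++ Z)[i]? = Z[i - (Z ++ Z.reverse).length]? :=
          List.getElem?_append_right (by omega)
        rw [e1, hsegel _, if_pos (show a + (i - (Z ++ Z.reverse).length) < p1 by omega),
          if_neg c1, if_neg c2, if_pos c3]
        exact getElem?_idx_congr (by omega)
      · have e1 : (Z ++ Z.reverse ++ Z)[i]? = none :=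
          List.getElem?_eq_none (by rw [List.length_append, hZZ, hZl]; omega)
        rw [e1, if_neg c1, if_neg c2, if_neg c3]

lemma palPt_of_zocc {w : List α} {p1 p2 : ℕ} (h : ZOcc w p1 p2) :
    PalPt w p1 (p2 - p1) ∧ PalPt w p2 (p2 - p1) := by
  obtain ⟨hlt, hle, hlen, hseg⟩ := h
  set s := p2 - p1 with hs
  set a := p1 - s with ha
  have hp1 : p1 = a + s := by omega
  have key : ∀ i, (if a + i < p2 + s then w[a + i]? else none) =
      (if i < s then w[a + i]?
       else if i < 2*s then w[a + (2*s - 1 - i)]?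
       else if i < 3*s then w[a + (i - 2*s)]?
       else none) := by
    intro i
    rw [← seg_getElem?, ← trip_eval hp1 (show p1 ≤ w.length by omega), hseg]
  have P1 : PalPt w p1 s := by
    intro p q hpq hq1 hq2
    have Ei := key (q - a)
    have d0 : a + (q - a) < p2 + s := by omega
    have d1 : ¬ (q - a < s) := by omega
    have d2 : q - a < 2*s := by omega
    rw [if_pos d0, if_neg d1, if_pos d2] at Ei
    calc w[p]? = w[a + (2*s - 1 - (q - a))]? := getElem?_idx_congr (by omega)
      _ = w[a + (q - a)]? := Ei.symm
      _ = w[q]? := getElem?_idx_congr (by omega)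
  have P2 : PalPt w p2 s := by
    intro p q hpq hq1 hq2
    have hp2 : p2 = a + 2*s := by omega
    have Ei := key (q - a)
    have d0 : a + (q - a) < p2 + s := by omega
    have d1 : ¬ (q - a < s) := by omega
    have d2 : ¬ (q - a < 2*s) := by omega
    have d3 : q - a < 3*s := by omega
    rw [if_pos d0, if_neg d1, if_neg d2, if_pos d3] at Ei
    calc w[p]? = w[a + (q - a - 2*s)]? := palPt_use P1 (by omega) (by omega) (by omega)
      _ = w[a + (q - a)]? := Ei.symm
      _ = w[q]? := getElem?_idx_congr (by omega)
  exact ⟨P1, P2⟩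

lemma zocc_of_palPt {w : List α} {c m : ℕ} (hm : 1 ≤ m) (hmc : m ≤ c)
    (hlen : c + 2*m ≤ w.length) (h1 : PalPt w c m) (h2 : PalPt w (c + m) m) :
    ZOcc w c (c + m) := by
  have hsub : c + m - c = m := by omega
  refine ⟨by omega, by omega, by omega, ?_⟩
  rw [hsub]
  obtain ⟨a, rfl⟩ : ∃ a, c = a + m := ⟨c - m, by omega⟩
  rw [show a + m - m = a from by omega]
  apply List.ext_getElem?
  intro i
  rw [seg_getElem?, trip_eval (show a + m = a + m from rfl) (show a + m ≤ w.length from by omega)]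
  by_cases c1 : i < m
  · rw [if_pos (show a + i < a + m + m + m by omega), if_pos c1]
  · by_cases c2 : i < 2*m
    · rw [if_pos (show a + i < a + m + m + m by omega), if_neg c1, if_pos c2]
      exact palPt_use h1 (by omega) (by omega) (by omega)
    · by_cases c3 : i < 3*m
      · rw [if_pos (show a + i < a + m + m + m by omega), if_neg c1, if_neg c2, if_pos c3]
        have u1 : w[a + i]? = w[a + (2*m - 1 - (i - 2*m))]? :=
          palPt_use h2 (by omega) (by omega) (by omega)
        have u2 : w[a + (2*m - 1 - (i - 2*m))]? = w[a + (i - 2*m)]? :=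
          palPt_use h1 (by omega) (by omega) (by omega)
        exact u1.trans u2
      · rw [if_neg (show ¬ (a + i < a + m + m + m) by omega), if_neg c1, if_neg c2, if_neg c3]

lemma zreducible_of_zocc {u : List α} {p1 p2 : ℕ} (h : ZOcc u p1 p2) : ZReducible u := by
  obtain ⟨hlt, hle, hlen, hseg⟩ := h
  set s := p2 - p1 with hs
  set a := p1 - s with ha
  set Z := seg u (a+1) p1 with hZdef
  have hZlen : Z.length = s := by rw [hZdef, seg_length a (by omega)]; omega
  refine ⟨u.take a ++ Z ++ u.drop (p2+s), u.take a, Z, u.drop (p2+s), ?_, ?_, rfl⟩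
  · intro hnil
    rw [hnil] at hZlen
    simp only [List.length_nil] at hZlen
    omega
  · have h1 : u.take (p2+s) = u.take a ++ (u.take (p2+s)).drop a :=
      take_eq_take_append u (by omega)
    have hX : (u.take (p2+s)).drop a = seg u (a+1) (p2+s) := by simp [seg]
    conv_lhs => rw [← List.take_append_drop (p2+s) u, h1, hX, hseg]
    simp [List.append_assoc]

lemma palPt_dropLast {w : List α} {c r : ℕ} (h : PalPt w c r) (hcr : c + r + 1 ≤ w.length) :
    PalPt w.dropLast c r := by
  intro p q hpq hq1 hq2
  have hp' : p < w.length - 1 := by omega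
  have hq' : q < w.length - 1 := by omega
  rw [List.dropLast_eq_take, List.getElem?_take, List.getElem?_take, if_pos hp', if_pos hq']
  exact h p q hpq hq1 hq2

lemma palPt_reflect {w : List α} {n s t : ℕ} (hst : s ≤ t) (h3t : 3*t ≤ n) (hs1 : 1 ≤ s)
    (h2 : PalPt w (n - s) s) (h4 : PalPt w (n - t) t) :
    PalPt w (n - 2*t + s) s := by
  intro p q hpq hq1 hq2
  have e1 : w[p]? = w[2*(n-t) - 1 - p]? := palPt_use h4 (by omega) (by omega) (by omega)
  have e2 : w[q]? = w[2*(n-t) - 1 - q]? := palPt_use h4 (by omega) (by omega) (by omega)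
  have e3 : w[2*(n-t) - 1 - p]? = w[2*(n-t) - 1 - q]? :=
    palPt_use h2 (by omega) (by omega) (by omega)
  rw [e1, e3, ← e2]

/-- every ss-reducible string contains exactly one Z-shape occurrence,
and it is a suffix occurrence. -/
theorem ssReducible_unique_zOcc (w : List α) (h : SSReducible w) :
    (∃! p : ℕ × ℕ, ZOcc w p.1 p.2) ∧
      ∀ p1 p2 : ℕ, ZOcc w p1 p2 → p2 + (p2 - p1) = w.length := by
  have hsuf : ∀ p1 p2 : ℕ, ZOcc w p1 p2 → p2 + (p2 - p1) = w.length := by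
    intro p1 p2 hz
    by_contra hne
    have hz0 := hz
    obtain ⟨hlt, hle, hlen, -⟩ := hz0
    obtain ⟨P1, P2⟩ := palPt_of_zocc hz
    set s := p2 - p1 with hs
    have hp2 : p2 = p1 + s := by omega
    have Q1 : PalPt w.dropLast p1 s := palPt_dropLast P1 (by omega)
    have Q2 : PalPt w.dropLast p2 s := palPt_dropLast P2 (by omega)
    rw [hp2] at Q2
    have hz2 : ZOcc w.dropLast p1 (p1 + s) :=
      zocc_of_palPt (by omega) (by omega) (by rw [List.length_dropLast]; omega) Q1 Q2
    obtain ⟨w', hw'⟩ := zreducible_of_zocc hz2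
    exact h.2 w' hw'
  have uniq : ∀ a1 a2 b1 b2 : ℕ, ZOcc w a1 a2 → ZOcc w b1 b2 → a2 - a1 < b2 - b1 → False := by
    intro a1 a2 b1 b2 hA hB hst
    have hsA := hsuf _ _ hA
    have hsB := hsuf _ _ hB
    have hA0 := hA
    obtain ⟨hltA, hleA, hlenA, -⟩ := hA0
    have hB0 := hB
    obtain ⟨hltB, hleB, hlenB, -⟩ := hB0
    obtain ⟨PA1, PA2⟩ := palPt_of_zocc hA
    obtain ⟨PB1, PB2⟩ := palPt_of_zocc hB
    set n := w.length with hn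
    set s := a2 - a1 with hsdef
    set t := b2 - b1 with htdef
    have hA2 : a2 = n - s := by omega
    have hB1 : b1 = n - 2*t := by omega
    have hB2 : b2 = n - t := by omega
    rw [hA2] at PA2
    rw [hB1] at PB1
    rw [hB2] at PB2
    have K1 : PalPt w (n - 2*t) s := palPt_mono PB1 (by omega)
    have K2 : PalPt w (n - 2*t + s) s := palPt_reflect (by omega) (by omega) (by omega) PA2 PB2
    have Q1 : PalPt w.dropLast (n - 2*t) s := palPt_dropLast K1 (by omega)
    have Q2 : PalPt w.dropLast (n - 2*t + s) s := palPt_dropLast K2 (by omega)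
    have hz2 : ZOcc w.dropLast (n - 2*t) (n - 2*t + s) :=
      zocc_of_palPt (by omega) (by omega) (by rw [List.length_dropLast]; omega) Q1 Q2
    obtain ⟨w', hw'⟩ := zreducible_of_zocc hz2
    exact h.2 w' hw'
  obtain ⟨w', hred⟩ := h.1
  obtain ⟨x, y, z, hy, hw, -⟩ := hred
  have hylen : 1 ≤ y.length := List.length_pos_iff.mpr hy
  have hwlen : w.length = x.length + 3*y.length + z.length := by
    rw [hw]; simp only [List.length_append, List.length_reverse]; omega
  have factA : ∀ i, i < y.length → w[x.length + i]? = y[i]? := by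
    intro i hi
    rw [hw]
    have e1 : (x ++ y ++ y.reverse ++ y ++ z)[x.length + i]? =
        (x ++ y ++ y.reverse ++ y)[x.length + i]? :=
      List.getElem?_append_left (by simp only [List.length_append, List.length_reverse]; omega)
    have e2 : (x ++ y ++ y.reverse ++ y)[x.length + i]? =
        (x ++ y ++ y.reverse)[x.length + i]? :=
      List.getElem?_append_left (by simp only [List.length_append, List.length_reverse]; omega)
    have e3 : (x ++ y ++ y.reverse)[x.length + i]? = (x ++ y)[x.length + i]? :=
      List.getElem?_append_left (by simp only [List.length_append, List.length_reverse]; omega)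
    have e4 : (x ++ y)[x.length + i]? = y[x.length + i - x.length]? :=
      List.getElem?_append_right (by omega)
    rw [e1, e2, e3, e4]
    exact getElem?_idx_congr (by omega)
  have factB : ∀ i, i < y.length → w[x.length + y.length + i]? = y[y.length - 1 - i]? := by
    intro i hi
    rw [hw]
    have e1 : (x ++ y ++ y.reverse ++ y ++ z)[x.length + y.length + i]? =
        (x ++ y ++ y.reverse ++ y)[x.length + y.length + i]? :=
      List.getElem?_append_left (by simp only [List.length_append, List.length_reverse]; omega)
    have e2 : (x ++ y ++ y.reverse ++ y)[x.length + y.length + i]? =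
        (x ++ y ++ y.reverse)[x.length + y.length + i]? :=
      List.getElem?_append_left (by simp only [List.length_append, List.length_reverse]; omega)
    have e3 : (x ++ y ++ y.reverse)[x.length + y.length + i]? =
        y.reverse[x.length + y.length + i - (x ++ y).length]? :=
      List.getElem?_append_right (by simp only [List.length_append]; omega)
    have e4 : y.reverse[x.length + y.length + i - (x ++ y).length]? = y.reverse[i]? :=
      getElem?_idx_congr (by simp only [List.length_append]; omega)
    have e5 : y.reverse[i]? = y[y.length - 1 - i]? := List.getElem?_reverse hi
    rw [e1, e2, e3, e4, e5]
  have factC : ∀ i, i < y.length → w[x.length + 2*y.length + i]? = y[i]? := by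
    intro i hi
    rw [hw]
    have e1 : (x ++ y ++ y.reverse ++ y ++ z)[x.length + 2*y.length + i]? =
        (x ++ y ++ y.reverse ++ y)[x.length + 2*y.length + i]? :=
      List.getElem?_append_left (by simp only [List.length_append, List.length_reverse]; omega)
    have e2 : (x ++ y ++ y.reverse ++ y)[x.length + 2*y.length + i]? =
        y[x.length + 2*y.length + i - (x ++ y ++ y.reverse).length]? :=
      List.getElem?_append_right (by simp only [List.length_append, List.length_reverse]; omega)
    have e3 : y[x.length + 2*y.length + i - (x ++ y ++ y.reverse).length]? = y[i]? :=
      getElem?_idx_congr (by simp only [List.length_append, List.length_reverse]; omega)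
    rw [e1, e2, e3]
  have P1 : PalPt w (x.length + y.length) y.length := by
    intro p q hpq hq1 hq2
    have e1 : w[p]? = y[p - x.length]? :=
      (getElem?_idx_congr (by omega)).trans (factA _ (by omega))
    have e2 : w[q]? = y[y.length - 1 - (q - x.length - y.length)]? :=
      (getElem?_idx_congr (by omega)).trans (factB _ (by omega))
    rw [e1, e2]
    exact getElem?_idx_congr (by omega)
  have P2 : PalPt w (x.length + 2*y.length) y.length := by
    intro p q hpq hq1 hq2
    have e1 : w[p]? = y[y.length - 1 - (p - x.length - y.length)]? :=
      (getElem?_idx_congr (by omega)).trans (factB _ (by omega))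
    have e2 : w[q]? = y[q - x.length - 2*y.length]? :=
      (getElem?_idx_congr (by omega)).trans (factC _ (by omega))
    rw [e1, e2]
    exact getElem?_idx_congr (by omega)
  have P2' : PalPt w (x.length + y.length + y.length) y.length := by
    rw [show x.length + y.length + y.length = x.length + 2*y.length from by omega]
    exact P2
  have hz1 : ZOcc w (x.length + y.length) (x.length + y.length + y.length) :=
    zocc_of_palPt hylen (by omega) (by omega) P1 P2'
  refine ⟨⟨(x.length + y.length, x.length + y.length + y.length), hz1, ?_⟩, hsuf⟩
  rintro ⟨q1, q2⟩ hq
  have hq' : ZOcc w q1 q2 := hq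
  have hs1 := hsuf _ _ hq'
  have hs2 := hsuf _ _ hz1
  have hq0 := hq'
  obtain ⟨hlt1, hle1, -, -⟩ := hq0
  have hz0 := hz1
  obtain ⟨hlt2, hle2, -, -⟩ := hz0
  have heq : q2 - q1 = y.length := by
    by_contra hne
    rcases Nat.lt_or_ge (q2 - q1) (x.length + y.length + y.length - (x.length + y.length)) with
      hlt | hge
    · exact uniq _ _ _ _ hq' hz1 hlt
    · exact uniq _ _ _ _ hz1 hq' (by omega)
  simp only [Prod.mk.injEq]
  constructor <;> omega
end

section
/- Let u be a string over Σ, let x and z be strings, and let y be a nonempty string. If x y z is the output of an end-to-end walk on the path graph labeled u, then x y yᴿ y z is also the output of an end-to-end walk on the path graph labeled u. -/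
/-!
Common definitions: strings as `List α` over an alphabet `α`, 1-based positions.
-/

variable {α : Type*}

/-- if `x y z` is the output of an end-to-end walk on the path graph
labeled `u` and `y` is nonempty, then so is `x y yᴿ y z`. -/
theorem endToEndWalkOutput_pump (u x y z : List α) (hy : y ≠ [])
    (h : EndToEndWalkOutput u (x ++ y ++ z)) :
    EndToEndWalkOutput u (x ++ y ++ y.reverse ++ y ++ z) := by
  obtain ⟨p, hp0, hpN, hble, hadj, hout⟩ := h
  set n := x.length with hn
  set m := y.length with hm
  have hm1 : 1 ≤ m := by
    rcases y with _ | _ <;> simp_all [hm]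
  have hT : (x ++ y ++ z).length = n + m + z.length := by simp [hn, hm]; omega
  have hW : (x ++ y ++ y.reverse ++ y ++ z).length = n + m + m + m + z.length := by
    simp [hn, hm]; omega
  rw [hT] at hpN hble hadj hout
  have hWT1 : ∀ i, i < n + m → (x ++ y ++ y.reverse ++ y ++ z)[i]? = (x ++ y ++ z)[i]? := by
    intro i hi
    by_cases hx : i < n
    · rw [show x ++ y ++ y.reverse ++ y ++ z = x ++ (y ++ y.reverse ++ y ++ z) by simp,
        show x ++ y ++ z = x ++ (y ++ z) by simp,
        List.getElem?_append_left hx, List.getElem?_append_left hx]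
    · push_neg at hx
      rw [show x ++ y ++ y.reverse ++ y ++ z = x ++ (y ++ (y.reverse ++ y ++ z)) by simp,
        show x ++ y ++ z = x ++ (y ++ z) by simp,
        List.getElem?_append_right hx, List.getElem?_append_right hx,
        List.getElem?_append_left (by omega : i - x.length < y.length),
        List.getElem?_append_left (by omega : i - x.length < y.length)]
  have hWT2 : ∀ i, n + m ≤ i → i < n + 2*m →
      (x ++ y ++ y.reverse ++ y ++ z)[i]? = (x ++ y ++ z)[2*(n+m) - 1 - i]? := by
    intro i h1 h2
    rw [show x ++ y ++ y.reverse ++ y ++ z = (x ++ y) ++ (y.reverse ++ (y ++ z)) by simp,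
      show x ++ y ++ z = x ++ (y ++ z) by simp,
      List.getElem?_append_right (by simp [hn, hm]; omega : (x ++ y).length ≤ i),
      List.getElem?_append_left (by simp [hn, hm]; omega : i - (x++y).length < y.reverse.length),
      List.getElem?_reverse (by simp [hn, hm]; omega),
      List.getElem?_append_right (by omega : x.length ≤ 2*(n+m) - 1 - i),
      List.getElem?_append_left (by simp [hn, hm]; omega : 2*(n+m) - 1 - i - x.length < y.length)]
    congr 1
    simp only [hn, hm, List.length_append]
    omega
  have hWT3 : ∀ i, n + 2*m ≤ i →
      (x ++ y ++ y.reverse ++ y ++ z)[i]? = (x ++ y ++ z)[i - 2*m]? := by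
    intro i h1
    rw [show x ++ y ++ y.reverse ++ y ++ z = (x ++ y ++ y.reverse) ++ (y ++ z) by simp,
      show x ++ y ++ z = x ++ (y ++ z) by simp,
      List.getElem?_append_right (by simp [hn, hm]; omega : (x ++ y ++ y.reverse).length ≤ i),
      List.getElem?_append_right (by omega : x.length ≤ i - 2*m)]
    congr 1
    simp only [hn, hm, List.length_append, List.length_reverse]
    omega
  set q : ℕ → ℕ := fun i => if i ≤ n + m then p i else if i ≤ n + 2*m then p (2*(n+m) - i)
      else p (i - 2*m) with hq
  have hq1 : ∀ j, j ≤ n + m → q j = p j := fun j hj => if_pos hj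
  have hq2 : ∀ j, n + m < j → j ≤ n + 2*m → q j = p (2*(n+m) - j) := by
    intro j h1 h2
    simp only [hq]
    rw [if_neg (by omega), if_pos h2]
  have hq3 : ∀ j, n + 2*m < j → q j = p (j - 2*m) := by
    intro j h1
    simp only [hq]
    rw [if_neg (by omega), if_neg (by omega)]
  refine ⟨q, by rw [hq1 0 (by omega)]; exact hp0, ?_, ?_, ?_, ?_⟩
  · rw [hW, hq3 _ (by omega), show n + m + m + m + z.length - 2*m = n + m + z.length by omega]
    exact hpN
  · intro i hi
    rw [hW] at hi
    by_cases h1 : i ≤ n + m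
    · rw [hq1 i h1]; exact hble i (by omega)
    · by_cases h2 : i ≤ n + 2*m
      · rw [hq2 i (by omega) h2]; exact hble _ (by omega)
      · rw [hq3 i (by omega)]; exact hble _ (by omega)
  · intro i hi
    rw [hW] at hi
    by_cases h1 : i + 1 ≤ n + m
    · rw [hq1 i (by omega), hq1 (i+1) h1]
      exact hadj i (by omega)
    · by_cases h2 : i ≤ n + m
      · rw [hq1 i h2, hq2 (i+1) (by omega) (by omega)]
        have := hadj (n + m - 1) (by omega)
        rw [show 2*(n+m) - (i+1) = n + m - 1 by omega, show i = n + m - 1 + 1 by omega]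
        tauto
      · by_cases h3 : i + 1 ≤ n + 2*m
        · rw [hq2 i (by omega) (by omega), hq2 (i+1) (by omega) h3]
          have := hadj (2*(n+m) - (i+1)) (by omega)
          rw [show 2*(n+m) - i = 2*(n+m) - (i+1) + 1 by omega]
          tauto
        · by_cases h4 : i ≤ n + 2*m
          · rw [hq2 i (by omega) h4, hq3 (i+1) (by omega)]
            have := hadj n (by omega)
            rw [show 2*(n+m) - i = n by omega, show i + 1 - 2*m = n + 1 by omega]
            tauto
          · rw [hq3 i (by omega), hq3 (i+1) (by omega)]
            have := hadj (i - 2*m) (by omega)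
            rw [show i + 1 - 2*m = i - 2*m + 1 by omega]
            tauto
  · intro i hi
    rw [hW] at hi
    by_cases h1 : i + 1 ≤ n + m
    · rw [hq1 i (by omega), hq1 (i+1) h1, hWT1 i (by omega)]
      exact hout i (by omega)
    · by_cases h2 : i ≤ n + m
      · rw [hq1 i h2, hq2 (i+1) (by omega) (by omega), hWT2 i (by omega) (by omega)]
        have := hout (2*(n+m) - 1 - i) (by omega)
        rw [show 2*(n+m) - 1 - i + 1 = i by omega] at this
        rw [this, show 2*(n+m) - (i+1) = 2*(n+m) - 1 - i by omega, Nat.max_comm]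
      · by_cases h3 : i + 1 ≤ n + 2*m
        · rw [hq2 i (by omega) (by omega), hq2 (i+1) (by omega) h3,
            hWT2 i (by omega) (by omega)]
          have := hout (2*(n+m) - 1 - i) (by omega)
          rw [show 2*(n+m) - 1 - i + 1 = 2*(n+m) - i by omega] at this
          rw [this, show 2*(n+m) - (i+1) = 2*(n+m) - 1 - i by omega, Nat.max_comm]
        · by_cases h4 : i ≤ n + 2*m
          · rw [hq2 i (by omega) h4, hq3 (i+1) (by omega), hWT3 i (by omega)]
            have := hout (i - 2*m) (by omega)
            rw [show i - 2*m = n by omega] at this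
            rw [show 2*(n+m) - i = n by omega, show i + 1 - 2*m = n + 1 by omega,
              show i - 2*m = n by omega]
            exact this
          · rw [hq3 i (by omega), hq3 (i+1) (by omega), hWT3 i (by omega)]
            have := hout (i - 2*m) (by omega)
            rw [show i + 1 - 2*m = i - 2*m + 1 by omega]
            exact this
end

section
/- Let w be a pp-irreducible string and c a position that is the center of a nonempty suffix palindrome of w, i.e., ρ_w(c) ≥ 1 and c + ρ_w(c) = |w|. Then w is ss-reducible (i.e., reducible) if and only if ρ_w(c − ρ_w(c)) ≥ ρ_w(c). -/
/-!
Common definitions: strings as `List α` over an alphabet `α`, 1-based positions.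
-/

variable {α : Type*}

/-!
A string is reducible iff it contains `y yᴿ y`, i.e. two even palindromes of the same radius
`t ≥ 1` whose centers are `t` apart. In a pp-irreducible string every such pair ends at the last
letter, so a reducible `w` ends with `y yᴿ y`: two suffix-aligned palindromes of radius `s = |y|`.
Compare `s` with `r = ρ_w(c)`. For `r < s`, the palindrome at `c` mirrored through the center of
`yᴿ y` forms a pair with `y yᴿ` shrunk to radius `r`; for `s < r < 2s`, the palindromes at `c` and
at the center of `yᴿ y`, both shrunk to radius `r − s`, form a pair; for `r ≥ 2s`, the palindromes
`y yᴿ` and `yᴿ y` mirrored through `c` form a pair. Each of these pairs ends before the last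
letter, which is impossible, so `r = s` and `y yᴿ` is a palindrome of radius `r` at `c − r`.
Conversely, such a palindrome together with the one at `c` is an occurrence of `y yᴿ y`.
-/

section Palindromes

variable {w : List α} {c r : ℕ}

theorem PalAt.mono_s7 (h : PalAt w c r) {r' : ℕ} (h' : r' ≤ r) : PalAt w c r' :=
  ⟨h'.trans h.1, by have := h.2.1; omega, fun k hk1 hk2 => h.2.2 k hk1 (hk2.trans h')⟩

theorem PalAt.le_rho (h : PalAt w c r) : r ≤ rho w c :=
  le_csSup ⟨c, fun _ hx => hx.1⟩ h

theorem palAt_rho (hc : c ≤ w.length) : PalAt w c (rho w c) :=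
  Nat.sSup_mem (s := {r | PalAt w c r}) ⟨0, Nat.zero_le c, by omega, fun _ _ _ => by omega⟩
    ⟨c, fun _ hx => hx.1⟩

theorem palAt_iff_le_rho (hc : c ≤ w.length) : PalAt w c r ↔ r ≤ rho w c :=
  ⟨PalAt.le_rho, (palAt_rho hc).mono_s7⟩

theorem PalAt.getElem?_eq (h : PalAt w c r) {i j : ℕ} (hij : i + j + 1 = 2 * c)
    (hi : c ≤ i + r) (hj : c ≤ j + r) : w[i]? = w[j]? := by
  have hrc := h.1
  rcases le_or_gt c j with hcj | hcj
  · simpa [show c - (j - c + 1) = i by omega, show c + (j - c + 1) - 1 = j by omega]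
      using h.2.2 (j - c + 1) (by omega) (by omega)
  · simpa [show c - (i - c + 1) = j by omega, show c + (i - c + 1) - 1 = i by omega]
      using (h.2.2 (i - c + 1) (by omega) (by omega)).symm

theorem PalAt.reflect (h : PalAt w c r) {e e' t : ℕ} (he : PalAt w e t)
    (hsum : e + e' = 2 * c) (hlo : c + t ≤ e + r) (hhi : e + t ≤ c + r) : PalAt w e' t := by
  have hrc := h.1
  have hcn := h.2.1
  have hte := he.1
  refine ⟨by omega, by omega, fun k hk1 hk2 => ?_⟩
  calc w[e' - k]? = w[e + k - 1]? := h.getElem?_eq (by omega) (by omega) (by omega)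
    _ = w[e - k]? := (he.2.2 k hk1 hk2).symm
    _ = w[e' + k - 1]? := h.getElem?_eq (by omega) (by omega) (by omega)

theorem PalAt.dropLast (h : PalAt w c r) (hlt : c + r < w.length) : PalAt w.dropLast c r := by
  refine ⟨h.1, by simp; omega, fun k hk1 hk2 => ?_⟩
  rw [List.getElem?_dropLast, List.getElem?_dropLast, if_pos (by omega), if_pos (by omega)]
  exact h.2.2 k hk1 hk2

theorem palAt_iff_exists_append : PalAt w c r ↔
    ∃ x u z : List α, x.length + u.length = c ∧ u.length = r ∧ w = x ++ u ++ u.reverse ++ z := by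
  constructor
  · intro h
    have hrc := h.1
    have hcn := h.2.1
    refine ⟨w.take (c - r), (w.drop (c - r)).take r, w.drop (c + r), by simp; omega,
      by simp; omega, ?_⟩
    have hmid : (w.drop c).take r = ((w.drop (c - r)).take r).reverse := by
      apply List.ext_getElem?
      intro i
      rcases lt_or_ge i r with hi | hi
      · rw [List.getElem?_reverse (by simp; omega)]
        simp only [List.getElem?_take, List.getElem?_drop, List.length_take, List.length_drop]
        rw [if_pos hi, if_pos (by omega), show min r (w.length - (c - r)) = r by omega]
        exact h.getElem?_eq (by omega) (by omega) (by omega)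
      · rw [List.getElem?_eq_none (by simp; omega), List.getElem?_eq_none (by simp; omega)]
    calc w = w.take (c - r + r + r) ++ w.drop (c + r) := by
          rw [show c - r + r + r = c + r by omega, List.take_append_drop]
      _ = _ := by
          rw [List.take_add, List.take_add, show c - r + r = c by omega, hmid]
  · rintro ⟨x, u, z, rfl, rfl, rfl⟩
    refine ⟨by omega, by simp; omega, fun k hk1 hk2 => ?_⟩
    simp only [List.append_assoc]
    rw [List.getElem?_append_right (by omega), List.getElem?_append_left (by omega),
      List.getElem?_append_right (by omega), List.getElem?_append_right (by omega),
      List.getElem?_append_left (by simp; omega), List.getElem?_reverse (by omega)]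
    congr 1
    omega

end Palindromes

theorem zReducible_iff_exists_palAt_pair {w : List α} :
    ZReducible w ↔ ∃ d t, 0 < t ∧ PalAt w d t ∧ PalAt w (d + t) t := by
  constructor
  · rintro ⟨-, x, y, z, hy, rfl, -⟩
    refine ⟨x.length + y.length, y.length, List.length_pos_iff.2 hy, ?_, ?_⟩
    · exact palAt_iff_exists_append.2 ⟨x, y, y ++ z, rfl, rfl, by simp⟩
    · exact palAt_iff_exists_append.2
        ⟨x ++ y, y.reverse, z, by simp, by simp, by simp⟩
  · rintro ⟨d, t, ht, h₁, h₂⟩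
    obtain ⟨x, u, z, hxu, hu, hw⟩ := palAt_iff_exists_append.1 h₁
    obtain ⟨x', u', z', hxu', hu', hw'⟩ := palAt_iff_exists_append.1 h₂
    obtain ⟨rfl, hrest⟩ := List.append_inj (s₁ := x') (s₂ := x ++ u)
      (by simpa using hw'.symm.trans hw) (by simp; omega)
    obtain ⟨rfl, rfl⟩ := List.append_inj hrest (by simp; omega)
    refine ⟨x ++ u ++ z', x, u, z', List.ne_nil_of_length_pos (by omega), ?_, rfl⟩
    simpa using hw'

theorem PPIrreducible.length_le_of_palAt_pair {w : List α} (hpp : PPIrreducible w) {d t : ℕ}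
    (ht : 0 < t) (h₁ : PalAt w d t) (h₂ : PalAt w (d + t) t) : w.length ≤ d + 2 * t := by
  by_contra! hlt
  obtain ⟨w', hw'⟩ := zReducible_iff_exists_palAt_pair.2
    ⟨d, t, ht, h₁.dropLast (by omega), h₂.dropLast (by omega)⟩
  exact hpp w' hw'

/-- for a pp-irreducible `w` with a nonempty suffix palindrome centered
at `c` (`ρ_w(c) ≥ 1`, `c + ρ_w(c) = |w|`), `w` is ss-reducible iff
`ρ_w(c − ρ_w(c)) ≥ ρ_w(c)`. -/
theorem ssReducible_iff_radius (w : List α) (hpp : PPIrreducible w) (c : ℕ)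
    (hr : 1 ≤ rho w c) (hsuf : c + rho w c = w.length) :
    SSReducible w ↔ rho w c ≤ rho w (c - rho w c) := by
  set r := rho w c
  have hc : PalAt w c r := palAt_rho (by omega)
  have hrc : r ≤ c := hc.1
  rw [← palAt_iff_le_rho (by omega)]
  constructor
  · rintro ⟨hred, -⟩
    obtain ⟨d, s, hs, hd, hds⟩ := zReducible_iff_exists_palAt_pair.1 hred
    have hend : d + 2 * s = w.length := by
      have := hds.2.1; have := hpp.length_le_of_palAt_pair hs hd hds; omega
    rcases lt_trichotomy r s with hlt | rfl | hgt
    · have := hpp.length_le_of_palAt_pair hr (hd.mono_s7 hlt.le)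
        (hds.reflect hc (by omega) (by omega) (by omega))
      omega
    · rwa [show c - r = d by omega]
    · rcases lt_or_ge r (2 * s) with hlt | hge
      · have := hpp.length_le_of_palAt_pair (t := r - s) (by omega) (hc.mono_s7 (by omega))
          ((show c + (r - s) = d + s by omega) ▸ hds.mono_s7 (by omega))
        omega
      · have := hpp.length_le_of_palAt_pair hs
          (hc.reflect hds (e' := 2 * c - (d + s)) (by omega) (by omega) (by omega))
          ((show 2 * c - d = 2 * c - (d + s) + s by omega) ▸
            hc.reflect hd (e' := 2 * c - d) (by omega) (by omega) (by omega))
        omega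
  · intro hpal
    refine ⟨zReducible_iff_exists_palAt_pair.2 ⟨c - r, r, hr, hpal, ?_⟩, hpp⟩
    rwa [show c - r + r = c by omega]
end

section
/- Let w be a pp-irreducible string, P a function assigning a natural number to each position, c a position that is right-good with respect to P, and d a position with c ⊏_w d. Then d is left-good with respect to P. -/
variable {α : Type*}

/-- in a pp-irreducible `w`, if `c` is right-good w.r.t. `P` and
`c ⊏_w d`, then `d` is left-good w.r.t. `P`. -/
theorem rightGood_sqsub_leftGood (w : List α) (hpp : PPIrreducible w) (P : ℕ → ℕ)
    (c d : ℕ) (hc : 1 ≤ c) (hd : d ≤ w.length) (hrg : RightGood w P c)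
    (hcd : Sqsub w c d) : LeftGood w P d := by
  have hν : c ≤ nu w d := by
    rw [nu, if_pos ⟨c, hcd⟩]
    exact le_csSup ⟨d, fun e he => le_of_lt he.1⟩ hcd
  have hle : d ≤ c + rho w c := hcd.2.2.1
  intro e he1 he2
  have h := hrg e (hν.trans he1) (he2.trans hle)
  omega
end
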